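/- Let r ∈ T with ⟨r,r⟩ = −2, and let R be the subgroup of T generated by r, ρ(r), ρ²(r), ρ³(r), ρ⁴(r). Assume the bilinear form restricted to R is negative definite. Then (⟨r,ρ(r)⟩, ⟨r,ρ²(r)⟩) equals (1,0) or (0,1), and there exists k ∈ {1,2} such that the vectors r, ρᵏ(r), ρ²ᵏ(r), ρ³ᵏ(r) form a ℤ-basis of R whose Gram matrix is [[-2,1,0,0],[1,-2,1,0],[0,1,-2,1],[0,0,1,-2]]; in particular R is isometric to the root lattice A₄. -/

import Mathlib

/-! The isometry `ρ` satisfies `1 + ρ + ρ² + ρ³ + ρ⁴ = 0`, so the Gram matrix of the orbit of `r`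
is circulant: `⟨ρⁱr, ρʲr⟩` depends only on `j - i mod 5`, with values `-2, a, b, b, a` where
`a = ⟨r, ρr⟩`, `b = ⟨r, ρ²r⟩`. Pairing `r` with the relation gives `a + b = 1`, and negativity of
`r + ρr` and `r + ρ²r` (nonzero, as `ρ` has odd order) gives `a, b ≤ 1`; hence `(a, b)` is
`(1, 0)` or `(0, 1)`. In the first case `r, ρr, ρ²r, ρ³r` have Gram matrix `A₄`, of determinant
`5`, so they are independent, and they span `R` since `ρ⁴r` is minus their sum. The second case
is the first one for `ρ²`, which satisfies the same relation and has the same orbit. -/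

open Matrix

/-- Gram matrix of `T = U ⊕ V ⊕ A₄ ⊕ A₄` (block diagonal, in the basis
`e, f, x, y, e₁, …, e₄, e₁', …, e₄'`). -/
def G : Matrix (Fin 12) (Fin 12) ℤ :=
  !![0, 1, 0, 0, 0, 0, 0, 0, 0, 0, 0, 0;
     1, 0, 0, 0, 0, 0, 0, 0, 0, 0, 0, 0;
     0, 0, 2, 1, 0, 0, 0, 0, 0, 0, 0, 0;
     0, 0, 1, -2, 0, 0, 0, 0, 0, 0, 0, 0;
     0, 0, 0, 0, -2, 1, 0, 0, 0, 0, 0, 0;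
     0, 0, 0, 0, 1, -2, 1, 0, 0, 0, 0, 0;
     0, 0, 0, 0, 0, 1, -2, 1, 0, 0, 0, 0;
     0, 0, 0, 0, 0, 0, 1, -2, 0, 0, 0, 0;
     0, 0, 0, 0, 0, 0, 0, 0, -2, 1, 0, 0;
     0, 0, 0, 0, 0, 0, 0, 0, 1, -2, 1, 0;
     0, 0, 0, 0, 0, 0, 0, 0, 0, 1, -2, 1;
     0, 0, 0, 0, 0, 0, 0, 0, 0, 0, 1, -2]

/-- The matrix of `ρ = ρ₀ ⊕ ρ₄ ⊕ ρ₄` (block diagonal). -/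
def ρ : Matrix (Fin 12) (Fin 12) ℤ :=
  !![0, -1, 0, 0, 0, 0, 0, 0, 0, 0, 0, 0;
     -1, -1, 1, 3, 0, 0, 0, 0, 0, 0, 0, 0;
     0, 0, -1, -1, 0, 0, 0, 0, 0, 0, 0, 0;
     0, -1, 0, 1, 0, 0, 0, 0, 0, 0, 0, 0;
     0, 0, 0, 0, 0, 0, 0, -1, 0, 0, 0, 0;
     0, 0, 0, 0, 1, 0, 0, -1, 0, 0, 0, 0;
     0, 0, 0, 0, 0, 1, 0, -1, 0, 0, 0, 0;
     0, 0, 0, 0, 0, 0, 1, -1, 0, 0, 0, 0;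
     0, 0, 0, 0, 0, 0, 0, 0, 0, 0, 0, -1;
     0, 0, 0, 0, 0, 0, 0, 0, 1, 0, 0, -1;
     0, 0, 0, 0, 0, 0, 0, 0, 0, 1, 0, -1;
     0, 0, 0, 0, 0, 0, 0, 0, 0, 0, 1, -1]

/-- The bilinear form of the lattice `T`: `⟨u, v⟩ = uᵀ G v`. -/
def B (u v : Fin 12 → ℤ) : ℤ := u ⬝ᵥ G.mulVec v

/-- Gram matrix of the root lattice `A₄`. -/
def A4gram : Matrix (Fin 4) (Fin 4) ℤ :=
  !![-2, 1, 0, 0;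
     1, -2, 1, 0;
     0, 1, -2, 1;
     0, 0, 1, -2]

open Finset

theorem pow_eq_one_of_geom_sum_eq_zero {A : Type*} [Ring A] {x : A} {n : ℕ}
    (h : ∑ i ∈ range n, x ^ i = 0) : x ^ n = 1 := by
  rw [← sub_eq_zero, ← geom_sum_mul, h, zero_mul]

theorem geom_sum_five_sq_eq_zero {A : Type*} [Ring A] {x : A}
    (h : ∑ i ∈ range 5, x ^ i = 0) : ∑ i ∈ range 5, (x ^ 2) ^ i = 0 := by
  have h5 := pow_eq_one_of_geom_sum_eq_zero h
  have h6 : x ^ 6 = x := by rw [pow_succ', h5, mul_one]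
  have h8 : x ^ 8 = x ^ 3 := by rw [show 8 = 5 + 3 by rfl, pow_add, h5, one_mul]
  simp only [sum_range_succ, sum_range_zero, ← pow_mul] at h ⊢
  norm_num [h6, h8] at h ⊢
  rw [← h]
  abel

theorem LinearMap.IsOrthogonal.pow {R M : Type*} [CommRing R] [AddCommGroup M] [Module R M]
    {β : LinearMap.BilinForm R M} {σ : Module.End R M} (hσ : β.IsOrthogonal σ) (n : ℕ) :
    β.IsOrthogonal ⇑(σ ^ n) := by
  induction n with
  | zero => intro x y; rfl
  | succ n ih => intro x y; rw [pow_succ, Module.End.mul_apply, Module.End.mul_apply, ih, hσ]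

theorem LinearMap.BilinForm.linearIndependent_of_det_gram_ne_zero {R M ι : Type*} [CommRing R]
    [IsDomain R] [AddCommGroup M] [Module R M] [Fintype ι] [DecidableEq ι]
    (β : LinearMap.BilinForm R M) (v : ι → M)
    (h : (Matrix.of fun i j => β (v i) (v j)).det ≠ 0) : LinearIndependent R v := by
  rw [Fintype.linearIndependent_iff]
  intro c hc
  refine congrFun (Matrix.eq_zero_of_mulVec_eq_zero h (funext fun i => ?_))
  have := congrArg (β (v i)) hc
  simpa [Matrix.mulVec, dotProduct, map_sum, mul_comm] using this

theorem Matrix.isOrthogonal_toBilin'_toLin' {n R : Type*} [Fintype n] [DecidableEq n]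
    [CommRing R] {M P : Matrix n n R} (h : Pᵀ * M * P = M) :
    M.toBilin'.IsOrthogonal P.toLin' := fun x y => by
  rw [← LinearMap.BilinForm.comp_apply, Matrix.toBilin'_comp, h]

theorem A4gram_det : A4gram.det = 5 := by decide

section CyclicIsometry

variable {M : Type*} [AddCommGroup M] {β : LinearMap.BilinForm ℤ M} {σ : Module.End ℤ M}
  {r : M}

def orbitLattice (σ : Module.End ℤ M) (r : M) : Submodule ℤ M :=
  Submodule.span ℤ {w | ∃ i < 5, w = (σ ^ i) r}

theorem apply_pow_apply_pow (hβ : β.IsSymm) (hσ : β.IsOrthogonal σ) (i j : ℕ) :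
    β ((σ ^ i) r) ((σ ^ j) r) = β r ((σ ^ (max i j - min i j)) r) := by
  wlog hij : i ≤ j generalizing i j
  · rw [hβ.eq, max_comm, min_comm]
    exact this j i (le_of_not_ge hij)
  obtain ⟨d, rfl⟩ := Nat.exists_eq_add_of_le hij
  rw [max_eq_right hij, min_eq_left hij, add_tsub_cancel_left, pow_add, Module.End.mul_apply,
    hσ.pow]

theorem apply_pow_sub_apply (hβ : β.IsSymm) (hσ : β.IsOrthogonal σ) {m n : ℕ} (hm : σ ^ m = 1)
    (hn : n ≤ m) : β r ((σ ^ (m - n)) r) = β r ((σ ^ n) r) := by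
  rw [← hσ.pow n, ← Module.End.mul_apply, ← pow_add, Nat.add_sub_cancel' hn, hm,
    Module.End.one_apply, hβ.eq]

theorem add_pow_apply_ne_zero (h5 : σ ^ 5 = 1) (hr : β r r ≠ 0) (n : ℕ) :
    r + (σ ^ n) r ≠ 0 := by
  intro h
  have hneg : (σ ^ n) r = -r := eq_neg_of_add_eq_zero_right h
  have hr' : r = -r := by
    calc r = ((σ ^ n) ^ 5) r := by rw [← pow_mul, mul_comm, pow_mul, h5, one_pow]; rfl
      _ = -r := by simp [pow_succ, Module.End.mul_apply, hneg]
  apply hr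
  have := congrArg (β r) hr'
  rw [map_neg] at this
  omega

theorem gram_orbit_sum_eq_zero (hβ : β.IsSymm) (hσ : β.IsOrthogonal σ)
    (hsum : ∑ i ∈ range 5, σ ^ i = 0) :
    β r r + 2 * β r (σ r) + 2 * β r ((σ ^ 2) r) = 0 := by
  have h5 := pow_eq_one_of_geom_sum_eq_zero hsum
  have h3 : β r ((σ ^ 3) r) = β r ((σ ^ 2) r) :=
    apply_pow_sub_apply (n := 2) hβ hσ h5 (by norm_num)
  have h4 : β r ((σ ^ 4) r) = β r ((σ ^ 1) r) :=
    apply_pow_sub_apply (n := 1) hβ hσ h5 (by norm_num)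
  have := congrArg (β r) (congrArg (· r) hsum)
  simp only [sum_range_succ, sum_range_zero, zero_add, LinearMap.add_apply, map_add, h3, h4,
    pow_zero, pow_one, Module.End.one_apply, LinearMap.zero_apply, map_zero] at this
  linarith

theorem apply_apply_pow_le_one (hβ : β.IsSymm) (hσ : β.IsOrthogonal σ) (h5 : σ ^ 5 = 1)
    (hr : β r r = -2) (hneg : ∀ v ∈ orbitLattice σ r, v ≠ 0 → β v v < 0) {n : ℕ} (hn : n < 5) :
    β r ((σ ^ n) r) ≤ 1 := by
  have hmem : r + (σ ^ n) r ∈ orbitLattice σ r :=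
    add_mem (Submodule.subset_span ⟨0, by norm_num, rfl⟩) (Submodule.subset_span ⟨n, hn, rfl⟩)
  have := hneg _ hmem (add_pow_apply_ne_zero (β := β) h5 (by omega) n)
  simp only [map_add, LinearMap.add_apply, hσ.pow n r r, hβ.eq ((σ ^ n) r) r] at this
  omega

theorem gram_orbit_cases (hβ : β.IsSymm) (hσ : β.IsOrthogonal σ)
    (hsum : ∑ i ∈ range 5, σ ^ i = 0) (hr : β r r = -2)
    (hneg : ∀ v ∈ orbitLattice σ r, v ≠ 0 → β v v < 0) :
    (β r (σ r) = 1 ∧ β r ((σ ^ 2) r) = 0) ∨ (β r (σ r) = 0 ∧ β r ((σ ^ 2) r) = 1) := by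
  have h5 := pow_eq_one_of_geom_sum_eq_zero hsum
  have h1 := apply_apply_pow_le_one hβ hσ h5 hr hneg (n := 1) (by norm_num)
  have h2 := apply_apply_pow_le_one hβ hσ h5 hr hneg (n := 2) (by norm_num)
  have := gram_orbit_sum_eq_zero (r := r) hβ hσ hsum
  rw [pow_one] at h1
  omega

theorem span_range_four_eq_orbitLattice (hsum : ∑ i ∈ range 5, σ ^ i = 0) :
    Submodule.span ℤ (Set.range fun j : Fin 4 => (σ ^ (j : ℕ)) r) = orbitLattice σ r := by
  refine le_antisymm (Submodule.span_le.2 ?_) (Submodule.span_le.2 ?_)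
  · rintro _ ⟨j, rfl⟩
    exact Submodule.subset_span ⟨j, by omega, rfl⟩
  · rintro _ ⟨i, hi, rfl⟩
    have mem (j : Fin 4) : (σ ^ (j : ℕ)) r ∈ Submodule.span ℤ
        (Set.range fun j : Fin 4 => (σ ^ (j : ℕ)) r) := Submodule.subset_span ⟨j, rfl⟩
    obtain hi | rfl := Nat.lt_succ_iff_lt_or_eq.1 hi
    · exact mem ⟨i, hi⟩
    · have h4 : (σ ^ 4) r = -((σ ^ 0) r + (σ ^ 1) r + (σ ^ 2) r + (σ ^ 3) r) := by
        refine eq_neg_of_add_eq_zero_right ?_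
        simpa [sum_range_succ, add_assoc] using congrArg (· r) hsum
      rw [h4]
      exact neg_mem (add_mem (add_mem (add_mem (mem 0) (mem 1)) (mem 2)) (mem 3))

theorem orbit_eq_range_of_pow_eq_one (h5 : σ ^ 5 = 1) :
    {w | ∃ i < 5, w = (σ ^ i) r} = Set.range fun i : ℕ => (σ ^ i) r := by
  ext w
  constructor
  · rintro ⟨i, -, rfl⟩
    exact ⟨i, rfl⟩
  · rintro ⟨i, rfl⟩
    exact ⟨i % 5, Nat.mod_lt _ (by norm_num), by rw [← pow_eq_pow_mod i h5]⟩

theorem orbitLattice_sq (h5 : σ ^ 5 = 1) : orbitLattice (σ ^ 2) r = orbitLattice σ r := by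
  have h5' : (σ ^ 2) ^ 5 = 1 := by rw [← pow_mul, mul_comm, pow_mul, h5, one_pow]
  -- `σ = (σ ^ 2) ^ 3`, so both powers of `σ` sweep out the same orbit
  have h6 : σ ^ 6 = σ := by rw [pow_succ', h5, mul_one]
  unfold orbitLattice
  rw [orbit_eq_range_of_pow_eq_one h5, orbit_eq_range_of_pow_eq_one h5']
  congr 1
  ext w
  constructor
  · rintro ⟨i, rfl⟩
    exact ⟨2 * i, by beta_reduce; rw [pow_mul]⟩
  · rintro ⟨i, rfl⟩
    exact ⟨3 * i, by
      beta_reduce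
      rw [← pow_mul, ← mul_assoc, pow_mul, show 2 * 3 = 6 from rfl, h6]⟩

theorem gram_eq_A4gram (hβ : β.IsSymm) (hσ : β.IsOrthogonal σ)
    (hsum : ∑ i ∈ range 5, σ ^ i = 0) (hr : β r r = -2) (h1 : β r (σ r) = 1)
    (h2 : β r ((σ ^ 2) r) = 0) (i j : Fin 4) :
    β ((σ ^ (i : ℕ)) r) ((σ ^ (j : ℕ)) r) = A4gram i j := by
  have h3 : β r ((σ ^ 3) r) = 0 :=
    (apply_pow_sub_apply (n := 2) hβ hσ (pow_eq_one_of_geom_sum_eq_zero hsum)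
      (by norm_num)).trans h2
  rw [apply_pow_apply_pow hβ hσ]
  fin_cases i <;> fin_cases j <;> simp [A4gram, hr, h1, h2, h3]

theorem A4_basis_of_orbit (hβ : β.IsSymm) (hσ : β.IsOrthogonal σ)
    (hsum : ∑ i ∈ range 5, σ ^ i = 0) (hr : β r r = -2) (h1 : β r (σ r) = 1)
    (h2 : β r ((σ ^ 2) r) = 0) :
    LinearIndependent ℤ (fun j : Fin 4 => (σ ^ (j : ℕ)) r) ∧
      Submodule.span ℤ (Set.range fun j : Fin 4 => (σ ^ (j : ℕ)) r) = orbitLattice σ r ∧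
      ∀ i j : Fin 4, β ((σ ^ (i : ℕ)) r) ((σ ^ (j : ℕ)) r) = A4gram i j := by
  have hgram := gram_eq_A4gram hβ hσ hsum hr h1 h2
  refine ⟨β.linearIndependent_of_det_gram_ne_zero _ ?_, span_range_four_eq_orbitLattice hsum,
    hgram⟩
  rw [show Matrix.of (fun i j : Fin 4 => β ((σ ^ (i : ℕ)) r) ((σ ^ (j : ℕ)) r)) = A4gram from
    Matrix.ext hgram, A4gram_det]
  norm_num

end CyclicIsometry

theorem G_isSymm : G.IsSymm := by
  unfold Matrix.IsSymm
  decide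

theorem ρ_transpose_mul_G_mul_ρ : ρᵀ * G * ρ = G := by decide

theorem geom_sum_ρ : ∑ i ∈ range 5, ρ ^ i = 0 := by
  simp only [sum_range_succ, sum_range_zero, zero_add]
  decide

theorem B_eq_toBilin' (u v : Fin 12 → ℤ) : B u v = G.toBilin' u v :=
  (Matrix.toBilin'_apply' G u v).symm

theorem stmt5 (r : Fin 12 → ℤ) (hr : B r r = -2)
    (R : Submodule ℤ (Fin 12 → ℤ))
    (hR : R = Submodule.span ℤ {w : Fin 12 → ℤ | ∃ i < 5, w = (ρ ^ i).mulVec r})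
    (hneg : ∀ v ∈ R, v ≠ 0 → B v v < 0) :
    ((B r (ρ.mulVec r) = 1 ∧ B r ((ρ ^ 2).mulVec r) = 0) ∨
      (B r (ρ.mulVec r) = 0 ∧ B r ((ρ ^ 2).mulVec r) = 1)) ∧
    ∃ k ∈ ({1, 2} : Set ℕ),
      LinearIndependent ℤ (fun j : Fin 4 => (ρ ^ (k * (j : ℕ))).mulVec r) ∧
      Submodule.span ℤ (Set.range fun j : Fin 4 => (ρ ^ (k * (j : ℕ))).mulVec r) = R ∧
      ∀ i j : Fin 4,
        B ((ρ ^ (k * (i : ℕ))).mulVec r) ((ρ ^ (k * (j : ℕ))).mulVec r) = A4gram i j := by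
  have hβ : G.toBilin'.IsSymm := Matrix.isSymm_toBilin'_iff_isSymm.2 G_isSymm
  have hσ := Matrix.isOrthogonal_toBilin'_toLin' ρ_transpose_mul_G_mul_ρ
  have hsum : ∑ i ∈ range 5, ρ.toLin' ^ i = 0 := by
    simp_rw [← Matrix.toLin'_pow, ← map_sum, geom_sum_ρ, map_zero]
  simp only [B_eq_toBilin', ← Matrix.toLin'_apply, Matrix.toLin'_pow] at hr hR hneg ⊢
  replace hR : R = orbitLattice ρ.toLin' r := hR
  subst hR
  rcases gram_orbit_cases hβ hσ hsum hr hneg with h | h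
  · refine ⟨Or.inl h, 1, by simp, ?_⟩
    simpa only [one_mul] using A4_basis_of_orbit hβ hσ hsum hr h.1 h.2
  · have h4 : G.toBilin' r (((ρ.toLin' ^ 2) ^ 2) r) = 0 := by
      rw [← pow_mul]
      exact (apply_pow_sub_apply (n := 1) hβ hσ (pow_eq_one_of_geom_sum_eq_zero hsum)
        (by norm_num)).trans h.1
    refine ⟨Or.inr h, 2, by simp, ?_⟩
    simp_rw [pow_mul]
    rw [← orbitLattice_sq (pow_eq_one_of_geom_sum_eq_zero hsum)]
    exact A4_basis_of_orbit hβ (hσ.pow 2) (geom_sum_five_sq_eq_zero hsum) hr h.2 h4
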